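/- Let a be a finite-dimensional nilpotent associative algebra over a finite field F_q. The size of every coadjoint orbit of G = 1 + a on a* is an even power of q, i.e., equals q^(2m) for some natural number m. -/

import Mathlib

/-! Every `1 + x` with `x ∈ a` is invertible because `x` is nilpotent, so `G = 1 + a` is in
bijection with `a`, and `1 + s` fixes `λ` exactly when `λ(s y) = λ(y s)` for all `y`, i.e. when `s`
lies in the radical of the alternating form `B_λ(x, y) = λ(xy - yx)`. Orbit–stabilizer then gives
an orbit of size `q ^ (dim a - dim rad B_λ)`, and the rank of an alternating form is even: split off
the hyperbolic plane `span {x, y}` for some `B x y ≠ 0` and induct on its orthogonal complement. -/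

open Unitization Module

variable {F : Type*} [Field F] [Fintype F]
  (a : Type*) [NonUnitalRing a] [Module F a] [SMulCommClass F a a] [IsScalarTower F a a]

/-- The coadjoint action `(Ad*(g)λ)(x) = λ(g⁻¹ x g)`. -/
noncomputable def coAd (g : (Unitization F a)ˣ) (l : Module.Dual F a) : Module.Dual F a :=
  l ∘ₗ (sndHom F F a) ∘ₗ (LinearMap.mulRight F ((g : Unitization F a))) ∘ₗ
    (LinearMap.mulLeft F (((g⁻¹ : (Unitization F a)ˣ) : Unitization F a))) ∘ₗ (inrHom F F a)

namespace LinearMap.BilinForm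

open Submodule

variable {K V : Type*} [Field K] [AddCommGroup V] [Module K V] {B : LinearMap.BilinForm K V}

theorem IsAlt.eq_zero_of_apply_add_smul_eq_zero (hB : B.IsAlt) {x y : V} (hxy : B x y ≠ 0)
    {s t : K} (hx : B (s • x + t • y) x = 0) (hy : B (s • x + t • y) y = 0) : s = 0 ∧ t = 0 := by
  have hyx : B y x ≠ 0 := fun h => hxy (hB.isRefl _ _ h)
  simp only [map_add, map_smul, LinearMap.add_apply, LinearMap.smul_apply, hB.self_eq_zero,
    smul_eq_mul, mul_zero, zero_add, add_zero] at hx hy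
  exact ⟨(mul_eq_zero.mp hy).resolve_right hxy, (mul_eq_zero.mp hx).resolve_right hyx⟩

theorem IsAlt.restrict (hB : B.IsAlt) (W : Submodule K V) : (B.restrict W).IsAlt :=
  fun u => hB u

theorem IsAlt.finrank_span_pair (hB : B.IsAlt) {x y : V} (hxy : B x y ≠ 0) :
    finrank K (span K {x, y}) = 2 := by
  have hli : LinearIndependent K ![x, y] := LinearIndependent.pair_iff.mpr fun s t hst =>
    hB.eq_zero_of_apply_add_smul_eq_zero hxy (by simp [hst]) (by simp [hst])
  rw [← Matrix.range_cons_cons_empty x y ![], finrank_span_eq_card hli, Fintype.card_fin]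

theorem IsAlt.nondegenerate_restrict_span_pair (hB : B.IsAlt) {x y : V} (hxy : B x y ≠ 0) :
    (B.restrict (span K {x, y})).Nondegenerate := by
  refine (hB.restrict _).isRefl.nondegenerate_iff_separatingLeft.mpr ?_
  rintro ⟨u, hu⟩ h
  obtain ⟨s, t, rfl⟩ := mem_span_pair.mp hu
  obtain ⟨rfl, rfl⟩ := hB.eq_zero_of_apply_add_smul_eq_zero hxy
    (h ⟨x, subset_span (by simp)⟩) (h ⟨y, subset_span (by simp)⟩)
  simp

theorem IsRefl.finrank_ker_restrict_orthogonal (hB : B.IsRefl) {W : Submodule K V}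
    (hW : Codisjoint W (B.orthogonal W)) :
    finrank K (LinearMap.ker (B.restrict (B.orthogonal W))) = finrank K (LinearMap.ker B) := by
  have hker : LinearMap.ker B ≤ B.orthogonal W := fun v hv w _ =>
    hB v w (by rw [LinearMap.mem_ker.mp hv, LinearMap.zero_apply])
  rw [ker_restrict_eq_of_codisjoint hW.symm fun u hu w hw => hB _ _ (hu w hw)]
  exact (comapSubtypeEquivOfLe hker).finrank_eq

theorem IsAlt.exists_finrank_eq_finrank_ker_add_two_mul [FiniteDimensional K V]
    (hB : B.IsAlt) : ∃ m, finrank K V = finrank K (LinearMap.ker B) + 2 * m := by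
  induction h : finrank K V using Nat.strong_induction_on generalizing V with
  | _ n ih =>
    by_cases hB0 : B = 0
    · subst hB0
      exact ⟨0, by rw [LinearMap.ker_zero, finrank_top, h, mul_zero, add_zero]⟩
    obtain ⟨x, y, hxy⟩ : ∃ x y, B x y ≠ 0 := by
      contrapose! hB0; ext x y; exact hB0 x y
    have hc := B.isCompl_orthogonal_of_restrict_nondegenerate hB.isRefl
      (hB.nondegenerate_restrict_span_pair hxy)
    have hdim := Submodule.finrank_add_eq_of_isCompl hc
    rw [hB.finrank_span_pair hxy] at hdim
    obtain ⟨m, hm⟩ := ih _ (by omega) (hB.restrict (B.orthogonal (span K {x, y}))) rfl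
    rw [hB.isRefl.finrank_ker_restrict_orthogonal hc.codisjoint] at hm
    exact ⟨m + 1, by omega⟩

end LinearMap.BilinForm

section CommutatorForm

variable {R A : Type*} [CommRing R] [NonUnitalRing A] [Module R A] [SMulCommClass R A A]
  [IsScalarTower R A A]

def commutatorForm (l : Module.Dual R A) : LinearMap.BilinForm R A :=
  (LinearMap.mul R A).compr₂ l - (LinearMap.mul R A).flip.compr₂ l

theorem commutatorForm_apply (l : Module.Dual R A) (x y : A) :
    commutatorForm l x y = l (x * y) - l (y * x) := rfl

theorem isAlt_commutatorForm (l : Module.Dual R A) : (commutatorForm l).IsAlt := fun x => by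
  simp [commutatorForm_apply]

theorem mem_ker_commutatorForm {l : Module.Dual R A} {x : A} :
    x ∈ LinearMap.ker (commutatorForm l) ↔ ∀ y, l (x * y) = l (y * x) := by
  simp [LinearMap.ext_iff, commutatorForm_apply, sub_eq_zero]

end CommutatorForm

namespace Unitization

theorem inr_snd_of_fst_eq_zero {R A : Type*} [Zero R] {u : Unitization R A} (h : u.fst = 0) :
    (inr u.snd : Unitization R A) = u :=
  Unitization.ext (by simp [h]) (by simp)

section Unipotent

variable (R A : Type*) [CommRing R] [NonUnitalRing A] [Module R A] [IsScalarTower R A A]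
  [SMulCommClass R A A]

def unipotentSubgroup : Subgroup (Unitization R A)ˣ :=
  (Units.map ((fstHom R A : Unitization R A →+* R) : Unitization R A →* R)).ker

variable {R A}

theorem mem_unipotentSubgroup {g : (Unitization R A)ˣ} :
    g ∈ unipotentSubgroup R A ↔ (g : Unitization R A).fst = 1 := by
  simp [unipotentSubgroup, Units.ext_iff]

theorem mem_unipotentSubgroup_iff_exists {g : (Unitization R A)ˣ} :
    g ∈ unipotentSubgroup R A ↔ ∃ x : A, (g : Unitization R A) = 1 + inr x := by
  rw [mem_unipotentSubgroup]
  refine ⟨fun h => ⟨(g : Unitization R A).snd, Unitization.ext (by simp [h]) (by simp)⟩, ?_⟩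
  rintro ⟨x, hx⟩
  simp [hx]

noncomputable def unipotentSubgroupEquiv (hA : ∀ x : A, IsNilpotent (inr x : Unitization R A)) :
    unipotentSubgroup R A ≃ A where
  toFun g := ((g : (Unitization R A)ˣ) : Unitization R A).snd
  invFun x := ⟨(hA x).isUnit_one_add.unit,
    mem_unipotentSubgroup_iff_exists.mpr ⟨x, (hA x).isUnit_one_add.unit_spec⟩⟩
  left_inv g := Subtype.ext <| Units.ext <| Unitization.ext
    (by simp [mem_unipotentSubgroup.mp g.2]) (by simp)
  right_inv x := by simp

end Unipotent

end Unitization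

section Coadjoint

variable {K A : Type*} [Field K] [NonUnitalRing A] [Module K A] [SMulCommClass K A A]
  [IsScalarTower K A A]

theorem coAd_apply (g : (Unitization K A)ˣ) (l : Module.Dual K A) (x : A) :
    coAd A g l x =
      l (((g⁻¹ : (Unitization K A)ˣ) : Unitization K A) * inr x * (g : Unitization K A)).snd :=
  rfl

noncomputable instance : MulAction (Unitization K A)ˣ (Module.Dual K A) where
  smul := coAd A
  one_smul l := by
    show coAd A 1 l = l
    ext x
    rw [coAd_apply]
    simp
  mul_smul g h l := by
    show coAd A (g * h) l = coAd A g (coAd A h l)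
    ext x
    rw [coAd_apply, coAd_apply, coAd_apply, inr_snd_of_fst_eq_zero (by simp)]
    simp only [mul_inv_rev, Units.val_mul, mul_assoc]

theorem coAd_eq_self_iff {g : (Unitization K A)ˣ} (hg : (g : Unitization K A).fst = 1)
    (l : Module.Dual K A) :
    coAd A g l = l ↔ (g : Unitization K A).snd ∈ LinearMap.ker (commutatorForm l) := by
  set s := (g : Unitization K A).snd
  have hg' : (g : Unitization K A) = 1 + inr s := Unitization.ext (by simp [hg]) (by simp [s])
  have hleft : ∀ y, (g : Unitization K A) * inr y = inr (y + s * y) := by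
    intro y; simp [hg', add_mul]
  have hright : ∀ y, inr y * (g : Unitization K A) = inr (y + y * s) := by
    intro y; simp [hg', mul_add]
  -- substituting `x = g y` turns `λ(g⁻¹ x g) = λ(x)` into `λ(y g) = λ(g y)`
  have hconj : ∀ y, coAd A g l (y + s * y) = l (y + y * s) := by
    intro y
    rw [coAd_apply, ← hleft, ← mul_assoc, Units.inv_mul, one_mul, hright, snd_inr]
  have hsurj : Function.Surjective fun y : A => y + s * y := fun x =>
    ⟨(((g⁻¹ : (Unitization K A)ˣ) : Unitization K A) * inr x).snd, inr_injective (R := K) <| by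
      rw [← hleft, inr_snd_of_fst_eq_zero (by simp), ← mul_assoc, Units.mul_inv, one_mul]⟩
  rw [LinearMap.ext_iff, hsurj.forall, mem_ker_commutatorForm]
  simp only [hconj, map_add, add_right_inj]
  exact forall_congr' fun y => eq_comm

noncomputable def stabilizerEquivKerCommutatorForm
    (hA : ∀ x : A, IsNilpotent (inr x : Unitization K A)) (l : Module.Dual K A) :
    MulAction.stabilizer (unipotentSubgroup K A) l ≃ LinearMap.ker (commutatorForm l) :=
  (unipotentSubgroupEquiv hA).subtypeEquiv fun g =>
    coAd_eq_self_iff (mem_unipotentSubgroup.mp g.2) l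

theorem natCard_orbit_mul_pow_finrank_ker_commutatorForm [Fintype K] [FiniteDimensional K A]
    (hA : ∀ x : A, IsNilpotent (inr x : Unitization K A)) (l : Module.Dual K A) :
    Nat.card (MulAction.orbit (unipotentSubgroup K A) l) *
        Fintype.card K ^ finrank K (LinearMap.ker (commutatorForm l)) =
      Fintype.card K ^ finrank K A := by
  rw [← Nat.card_eq_fintype_card, ← natCard_eq_pow_finrank, ← natCard_eq_pow_finrank,
    ← Nat.card_congr (stabilizerEquivKerCommutatorForm hA l),
    ← Nat.card_congr (unipotentSubgroupEquiv hA), ← Nat.card_prod]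
  exact Nat.card_congr (MulAction.orbitProdStabilizerEquivGroup _ l)

end Coadjoint

/-- For a finite-dimensional nilpotent associative algebra `a` over `F_q`, the size of
every coadjoint orbit of `G = 1 + a` on `a*` is an even power of `q`. -/
theorem stmt8 [FiniteDimensional F a]
    (hnil : ∃ n : ℕ, 0 < n ∧ ∀ f : Fin n → a,
      (List.ofFn (fun i => (inr (f i) : Unitization F a))).prod = 0)
    (lam : Module.Dual F a) :
    ∃ m : ℕ, Nat.card {mu : Module.Dual F a |
        ∃ g : (Unitization F a)ˣ, (∃ x : a, (g : Unitization F a) = 1 + inr x) ∧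
          coAd a g lam = mu}
      = Fintype.card F ^ (2 * m) := by
  obtain ⟨n, -, hprod⟩ := hnil
  have hA : ∀ x : a, IsNilpotent (inr x : Unitization F a) := fun x =>
    ⟨n, by simpa [List.ofFn_const, List.prod_replicate] using hprod fun _ => x⟩
  have horbit : {mu : Module.Dual F a |
      ∃ g : (Unitization F a)ˣ, (∃ x : a, (g : Unitization F a) = 1 + inr x) ∧
        coAd a g lam = mu} = MulAction.orbit (unipotentSubgroup F a) lam := by
    ext mu
    simp only [Set.mem_ofPred_eq, MulAction.mem_orbit_iff, Subtype.exists, Subgroup.mk_smul,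
      mem_unipotentSubgroup_iff_exists, exists_prop]
    rfl
  obtain ⟨m, hm⟩ := (isAlt_commutatorForm lam).exists_finrank_eq_finrank_ker_add_two_mul
  have hcard := natCard_orbit_mul_pow_finrank_ker_commutatorForm hA lam
  rw [← horbit, hm, pow_add, mul_comm (_ ^ _)] at hcard
  exact ⟨m, Nat.eq_of_mul_eq_mul_right (by positivity) hcard⟩
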